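/- For every element ħ of R and every formal power series U ∈ R[[x_1,…,x_r]], there exists a unique formal power series Ψ ∈ A satisfying the Burgers-type system ∂Ψ/∂s_{ij} = (ħ/{ij}!) · [ ∂²Ψ/∂x_i∂x_j + (∂Ψ/∂x_i)(∂Ψ/∂x_j) ] for all 1 ≤ i ≤ j ≤ r, together with the initial condition Ψ|_{S=0} = U. -/

import Mathlib

/-- Index type for the variables `s_{ij}`, `1 ≤ i ≤ j ≤ r`. -/
def SVar (r : ℕ) := {p : Fin r × Fin r // p.1 ≤ p.2}

instance {r : ℕ} : DecidableEq (SVar r) :=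
  inferInstanceAs (DecidableEq {p : Fin r × Fin r // p.1 ≤ p.2})

instance {r : ℕ} : Fintype (SVar r) :=
  inferInstanceAs (Fintype {p : Fin r × Fin r // p.1 ≤ p.2})

/-- The index of the variable `s_{ij} = s_{ji}` for arbitrary `i j`. -/
def sIdx {r : ℕ} (i j : Fin r) : SVar r :=
  if h : i ≤ j then ⟨(i, j), h⟩ else ⟨(j, i), le_of_not_ge h⟩

/-- Formal partial derivative `∂f/∂x_i` of a multivariate formal power series:
the coefficient of `∂f/∂x_i` at a monomial `m` is `(m i + 1) · (coeff of f at m + {i})`. -/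
noncomputable def pd {σ : Type*} (R : Type*) [CommSemiring R]
    (i : σ) (f : MvPowerSeries σ R) : MvPowerSeries σ R :=
  fun m => (((m i) + 1 : ℕ) : R) * MvPowerSeries.coeff (R := R) (m + Finsupp.single i 1) f

/-- Substitution of `s_{ij} = 0` for all `i ≤ j`: restriction to the `x`-variables. -/
noncomputable def resS0 {r : ℕ} {R : Type*} [CommSemiring R]
    (f : MvPowerSeries (Fin r ⊕ SVar r) R) : MvPowerSeries (Fin r) R :=
  fun m => MvPowerSeries.coeff (R := R) (Finsupp.mapDomain Sum.inl m) f

/-!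
Cole–Hopf. Let `c₀` be the constant term of `U` and `Φ₀ = exp (U - c₀)`. The operators
`D_s = (ħ/{ij}!) ∂²/∂x_i∂x_j` commute, so `Φ = exp (∑ s_{ij} D_{ij}) Φ₀`, whose coefficient of
`S ^ α` is `D ^ α Φ₀ / α!`, solves the linear system `∂Φ/∂s_{ij} = D_{ij} Φ` with `Φ|_{S=0} = Φ₀`.
Then `Ψ = c₀ + log Φ` solves the Burgers system, and `Ψ|_{S=0} = U` because both sides have the
same constant term and the same logarithmic derivatives. Uniqueness is an induction on the degree
in the variables `s_{ij}`: the system expresses the coefficients of `S`-degree `n + 1` through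
those of `S`-degree at most `n`.
-/

open MvPowerSeries
open scoped Nat

namespace Finsupp

variable {σ τ : Type*}

@[simp]
theorem sumFinsuppAddEquivProdFinsupp_single_inl (i : σ) (n : ℕ) :
    sumFinsuppAddEquivProdFinsupp (single (Sum.inl i : σ ⊕ τ) n) = (single i n, 0) := by
  ext <;> simp

@[simp]
theorem sumFinsuppAddEquivProdFinsupp_single_inr (s : τ) (n : ℕ) :
    sumFinsuppAddEquivProdFinsupp (single (Sum.inr s : σ ⊕ τ) n) = (0, single s n) := by
  ext <;> simp

@[simp]
theorem sumFinsuppAddEquivProdFinsupp_embDomain_inl (x : σ →₀ ℕ) :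
    sumFinsuppAddEquivProdFinsupp (embDomain (Function.Embedding.inl : σ ↪ σ ⊕ τ) x) =
      (x, 0) := by
  ext <;> simp

theorem prod_factorial_add_single (α : τ →₀ ℕ) (s : τ) :
    ((α + single s 1).prod fun _ n => (n ! : ℚ)) = (α s + 1) * α.prod fun _ n => (n ! : ℚ) := by
  have herase : (α + single s 1).erase s = α.erase s := by
    ext t
    rcases eq_or_ne t s with rfl | hts <;> simp [erase_ne, *]
  rw [← mul_prod_erase' _ s _ (by simp), ← mul_prod_erase' α s _ (by simp), herase]
  simp only [coe_add, Pi.add_apply, single_eq_same, Nat.factorial_succ, Nat.cast_mul,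
    Nat.cast_add, Nat.cast_one]
  ring

end Finsupp

section HeatSlice

variable {τ M : Type*} (D : τ → M → M) [LeftCommutative D]

noncomputable def opPow (α : τ →₀ ℕ) (x : M) : M :=
  α.toMultiset.foldr D x

theorem opPow_zero (x : M) : opPow D 0 x = x := by
  rw [opPow, Finsupp.toMultiset_zero, Multiset.foldr_zero]

theorem opPow_add_single (α : τ →₀ ℕ) (s : τ) (x : M) :
    opPow D (α + Finsupp.single s 1) x = D s (opPow D α x) := by
  rw [opPow, Finsupp.toMultiset_add, Finsupp.toMultiset_single, one_nsmul, add_comm,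
    Multiset.singleton_add, Multiset.foldr_cons, opPow]

variable [AddCommGroup M] [Module ℚ M]

noncomputable def heatSlice (x : M) (α : τ →₀ ℕ) : M :=
  (α.prod fun _ n => (n ! : ℚ))⁻¹ • opPow D α x

theorem heatSlice_zero (x : M) : heatSlice D x 0 = x := by
  rw [heatSlice, Finsupp.prod_zero_index, inv_one, one_smul, opPow_zero]

theorem succ_nsmul_heatSlice_add_single (hD : ∀ s (q : ℚ) y, D s (q • y) = q • D s y)
    (x : M) (α : τ →₀ ℕ) (s : τ) :
    (α s + 1) • heatSlice D x (α + Finsupp.single s 1) = D s (heatSlice D x α) := by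
  rw [heatSlice, heatSlice, hD, opPow_add_single, ← Nat.cast_smul_eq_nsmul ℚ, smul_smul,
    Finsupp.prod_factorial_add_single, mul_inv, ← mul_assoc, Nat.cast_succ,
    mul_inv_cancel₀ (by positivity), one_mul]

end HeatSlice

namespace PowerSeries

variable {R : Type*} [CommRing R] [Algebra ℚ R]

theorem one_add_X_mul_derivative_log : (1 + X) * derivative R (log R) = 1 := by
  ext n
  rw [deriv_log, add_mul, one_mul, map_add]
  rcases n with _ | n
  · simp
  · rw [coeff_succ_X_mul, coeff_mk, coeff_mk, coeff_one, if_neg n.succ_ne_zero, ← map_add]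
    simp [pow_succ]

end PowerSeries

namespace MvPowerSeries

variable {σ τ R : Type*} [CommRing R]

theorem pderiv_comm (i j : σ) (f : MvPowerSeries σ R) :
    pderiv R i (pderiv R j f) = pderiv R j (pderiv R i f) := by
  classical
  ext m
  simp only [coeff_pderiv, Finsupp.add_apply, add_right_comm m (Finsupp.single i 1)]
  rcases eq_or_ne i j with rfl | hij
  · rfl
  · simp only [Finsupp.single_apply, if_neg hij, if_neg hij.symm, add_zero]
    ring

theorem constantCoeff_killCompl {ρ : Type*} (e : σ ↪ ρ) (p : MvPowerSeries ρ R) :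
    constantCoeff (killCompl e p) = constantCoeff p := by
  rw [← coeff_zero_eq_constantCoeff_apply, coeff_killCompl, Finsupp.embDomain_zero,
    coeff_zero_eq_constantCoeff_apply]

theorem pderiv_killCompl {ρ : Type*} (e : σ ↪ ρ) (i : σ) (p : MvPowerSeries ρ R) :
    pderiv R i (killCompl e p) = killCompl e (pderiv R (e i) p) := by
  ext x
  rw [coeff_pderiv, coeff_killCompl, coeff_killCompl, coeff_pderiv, Finsupp.embDomain_add,
    Finsupp.embDomain_single, Finsupp.embDomain_apply_self]

/-- The defect `pderiv (g.subst a) - (g').subst a * pderiv a` vanishes on polynomials and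
satisfies a Leibniz rule, so splitting `f = X ^ N * g + trunc N f` shows that the defect of `f`
is divisible by `a ^ N` for every `N`. -/
theorem pderiv_subst {a : MvPowerSeries σ R} (ha : constantCoeff a = 0) (i : σ)
    (f : PowerSeries R) :
    pderiv R i (f.subst a) = (PowerSeries.derivative R f).subst a * pderiv R i a := by
  have hs : PowerSeries.HasSubst a := .of_constantCoeff_zero ha
  set defect : PowerSeries R → MvPowerSeries σ R := fun g =>
    pderiv R i (g.subst a) - (PowerSeries.derivative R g).subst a * pderiv R i a
  have defect_coe : ∀ p : Polynomial R, defect p = 0 := fun p => by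
    simp [defect, PowerSeries.subst_coe hs, PowerSeries.derivative_coe, smul_eq_mul]
  have defect_eq : ∀ N, defect f = a ^ N * defect (.mk fun k => PowerSeries.coeff (k + N) f) := by
    intro N
    have htrunc := defect_coe (f.trunc N)
    have hXpow := defect_coe (Polynomial.X ^ N)
    push_cast at hXpow
    simp only [defect] at htrunc hXpow ⊢
    conv_lhs => rw [PowerSeries.eq_X_pow_mul_shift_add_trunc N f]
    simp only [map_add, Derivation.leibniz, PowerSeries.subst_add hs, PowerSeries.subst_mul hs,
      smul_eq_mul]
    rw [PowerSeries.subst_pow hs, PowerSeries.subst_X hs] at hXpow ⊢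
    linear_combination htrunc +
      (PowerSeries.mk fun k => PowerSeries.coeff (k + N) f).subst a * hXpow
  rw [← sub_eq_zero, ← order_eq_top_iff, ENat.eq_top_iff_forall_ge]
  intro N
  calc (N : ℕ∞) ≤ (a ^ N).order := le_order_pow_of_constantCoeff_eq_zero N ha
    _ ≤ (a ^ N).order + (defect _).order := le_self_add
    _ ≤ _ := defect_eq N ▸ le_order_mul

section Rat

variable [Algebra ℚ R]

theorem constantCoeff_exp_subst {f : MvPowerSeries σ R} (hf : constantCoeff f = 0) :
    constantCoeff ((PowerSeries.exp R).subst f) = 1 := by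
  have hs : PowerSeries.HasSubst f := .of_constantCoeff_zero hf
  have h := PowerSeries.constantCoeff_subst_eq_zero hf (PowerSeries.exp R - 1)
    (by simp [PowerSeries.constantCoeff_exp])
  rwa [PowerSeries.subst_sub hs, ← map_one (PowerSeries.C (R := R)), PowerSeries.subst_C, map_sub,
    map_one, sub_eq_zero] at h

theorem pderiv_exp_subst {f : MvPowerSeries σ R} (hf : constantCoeff f = 0) (i : σ) :
    pderiv R i ((PowerSeries.exp R).subst f) = (PowerSeries.exp R).subst f * pderiv R i f := by
  rw [pderiv_subst hf, PowerSeries.derivative_exp]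

theorem mul_pderiv_log_subst {Φ : MvPowerSeries σ R} (hΦ : constantCoeff Φ = 1) (i : σ) :
    Φ * pderiv R i ((PowerSeries.log R).subst (Φ - 1)) = pderiv R i Φ := by
  have hu : constantCoeff (Φ - 1) = 0 := by rw [map_sub, hΦ, map_one, sub_self]
  have hs : PowerSeries.HasSubst (Φ - 1) := .of_constantCoeff_zero hu
  have h := congrArg (PowerSeries.subst (R := R) (Φ - 1)) PowerSeries.one_add_X_mul_derivative_log
  rw [PowerSeries.subst_mul hs, PowerSeries.subst_add hs, PowerSeries.subst_X hs,
    ← map_one (PowerSeries.C (R := R)), PowerSeries.subst_C, map_one, add_sub_cancel] at h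
  rw [pderiv_subst hu, ← mul_assoc, h, one_mul, map_sub, Derivation.map_one_eq_zero, sub_zero]

end Rat

open Finsupp (sumFinsuppAddEquivProdFinsupp)

/-- The series over `σ ⊕ τ` whose coefficient of `t ^ α` (`t` the `τ`-variables) is `F α`. -/
noncomputable def ofSlices (F : (τ →₀ ℕ) → MvPowerSeries σ R) : MvPowerSeries (σ ⊕ τ) R :=
  fun m => coeff (sumFinsuppAddEquivProdFinsupp m).1 (F (sumFinsuppAddEquivProdFinsupp m).2)

theorem coeff_ofSlices (F : (τ →₀ ℕ) → MvPowerSeries σ R) (m : σ ⊕ τ →₀ ℕ) :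
    coeff m (ofSlices F) =
      coeff (sumFinsuppAddEquivProdFinsupp m).1 (F (sumFinsuppAddEquivProdFinsupp m).2) :=
  rfl

theorem pderiv_inl_ofSlices (F : (τ →₀ ℕ) → MvPowerSeries σ R) (i : σ) :
    pderiv R (Sum.inl i) (ofSlices F) = ofSlices fun α => pderiv R i (F α) := by
  ext m
  simp only [coeff_pderiv, coeff_ofSlices, map_add, Prod.fst_add, Prod.snd_add, add_zero,
    Finsupp.sumFinsuppAddEquivProdFinsupp_single_inl, Finsupp.fst_sumFinsuppAddEquivProdFinsupp]

theorem pderiv_inr_ofSlices (F : (τ →₀ ℕ) → MvPowerSeries σ R) (s : τ) :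
    pderiv R (Sum.inr s) (ofSlices F) =
      ofSlices fun α => (α s + 1) • F (α + Finsupp.single s 1) := by
  ext m
  simp only [coeff_pderiv, coeff_ofSlices, map_add, Prod.fst_add, Prod.snd_add, add_zero,
    Finsupp.sumFinsuppAddEquivProdFinsupp_single_inr, Finsupp.snd_sumFinsuppAddEquivProdFinsupp,
    map_nsmul]
  rw [nsmul_eq_mul, mul_comm]
  push_cast
  rfl

theorem smul_ofSlices (c : R) (F : (τ →₀ ℕ) → MvPowerSeries σ R) :
    c • ofSlices F = ofSlices fun α => c • F α :=
  rfl

theorem killCompl_inl_ofSlices (F : (τ →₀ ℕ) → MvPowerSeries σ R) :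
    killCompl Function.Embedding.inl (ofSlices F) = F 0 := by
  ext x
  simp [coeff_killCompl, coeff_ofSlices]

section Heat

variable (i j : τ → σ) (c : τ → R)

noncomputable def heatOp (s : τ) (f : MvPowerSeries σ R) : MvPowerSeries σ R :=
  c s • pderiv R (i s) (pderiv R (j s) f)

instance : LeftCommutative (heatOp i j c) where
  left_comm s t f := by
    simp only [heatOp, Derivation.map_smul, smul_smul, mul_comm (c s)]
    rw [pderiv_comm (j s) (i t), pderiv_comm (i s) (i t), pderiv_comm (j s) (j t),
      pderiv_comm (i s) (j t)]

theorem exists_heat_solution [Algebra ℚ R] (Φ₀ : MvPowerSeries σ R) :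
    ∃ Φ : MvPowerSeries (σ ⊕ τ) R, killCompl Function.Embedding.inl Φ = Φ₀ ∧
      ∀ s, pderiv R (Sum.inr s) Φ =
        c s • pderiv R (Sum.inl (i s)) (pderiv R (Sum.inl (j s)) Φ) := by
  refine ⟨ofSlices (heatSlice (heatOp i j c) Φ₀), by rw [killCompl_inl_ofSlices, heatSlice_zero],
    fun s => ?_⟩
  have hlin : ∀ s (q : ℚ) f, heatOp i j c s (q • f) = q • heatOp i j c s f := fun s q f => by
    simp only [heatOp, Derivation.map_smul_of_tower, smul_comm (c s) q]
  rw [pderiv_inr_ofSlices, pderiv_inl_ofSlices, pderiv_inl_ofSlices, smul_ofSlices]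
  simp only [succ_nsmul_heatSlice_add_single _ hlin]
  rfl

end Heat

/-- Cole–Hopf: `hlog` says that `Φ` is `exp Ψ` up to a constant factor. -/
theorem burgers_of_heat {ι : Type*} {Φ Ψ : MvPowerSeries ι R} (hΦ : IsUnit Φ)
    (hlog : ∀ t, Φ * pderiv R t Ψ = pderiv R t Φ) {u a b : ι} {c : R}
    (hheat : pderiv R u Φ = c • pderiv R a (pderiv R b Φ)) :
    pderiv R u Ψ = c • (pderiv R a (pderiv R b Ψ) + pderiv R a Ψ * pderiv R b Ψ) := by
  refine hΦ.mul_left_cancel ?_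
  rw [hlog, hheat, ← hlog b, Derivation.leibniz, ← hlog a, smul_eq_mul, smul_eq_mul,
    mul_smul_comm]
  ring_nf

variable (σ τ R) in
/-- Series all of whose monomials have degree at least `n` in the `τ`-variables. -/
def sFiltration (n : ℕ) : Ideal (MvPowerSeries (σ ⊕ τ) R) where
  carrier := {f | (n : ℕ∞) ≤ f.weightedOrder (Sum.elim 0 1)}
  add_mem' hf hg := (le_min hf hg).trans (min_weightedOrder_le_add _)
  zero_mem' := by simp
  smul_mem' g _ hf := hf.trans (le_add_self.trans (le_weightedOrder_mul _))

theorem mem_sFiltration {n : ℕ} {f : MvPowerSeries (σ ⊕ τ) R} :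
    f ∈ sFiltration σ τ R n ↔ (n : ℕ∞) ≤ f.weightedOrder (Sum.elim 0 1) :=
  Iff.rfl

theorem pderiv_inl_mem_sFiltration {n : ℕ} {f : MvPowerSeries (σ ⊕ τ) R}
    (hf : f ∈ sFiltration σ τ R n) (i : σ) : pderiv R (Sum.inl i) f ∈ sFiltration σ τ R n := by
  refine nat_le_weightedOrder _ fun d hd => ?_
  rw [coeff_pderiv, coeff_eq_zero_of_lt_weightedOrder _ ((lt_of_lt_of_le ?_ hf)), zero_mul]
  simpa [Finsupp.weight_single] using hd

theorem mem_sFiltration_succ [IsAddTorsionFree R] {n : ℕ} {f : MvPowerSeries (σ ⊕ τ) R}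
    (h₀ : killCompl Function.Embedding.inl f = 0)
    (h : ∀ s, pderiv R (Sum.inr s) f ∈ sFiltration σ τ R n) : f ∈ sFiltration σ τ R (n + 1) := by
  refine nat_le_weightedOrder _ fun d hd => ?_
  by_cases hd₀ : ∀ s, d (Sum.inr s) = 0
  · obtain ⟨x, rfl⟩ : ∃ x, Finsupp.embDomain Function.Embedding.inl x = d := by
      refine ⟨(sumFinsuppAddEquivProdFinsupp d).1, sumFinsuppAddEquivProdFinsupp.injective ?_⟩
      ext s <;> simp [hd₀]
    rw [← coeff_killCompl, h₀, map_zero]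
  · obtain ⟨s, hs⟩ := not_forall.1 hd₀
    obtain ⟨d', rfl⟩ : ∃ d', d' + Finsupp.single (Sum.inr s) 1 = d :=
      ⟨d - Finsupp.single (Sum.inr s) 1, tsub_add_cancel_of_le (by simpa [Nat.one_le_iff_ne_zero])⟩
    have hd' : Finsupp.weight (Sum.elim 0 1) d' < n := by
      simpa [Finsupp.weight_single] using hd
    have hc := coeff_eq_zero_of_lt_weightedOrder _ ((Nat.cast_lt.2 hd').trans_le (h s))
    rw [coeff_pderiv, ← Nat.cast_succ, mul_comm, ← nsmul_eq_mul] at hc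
    exact (nsmul_eq_zero_iff_right (Nat.succ_ne_zero _)).1 hc

theorem eq_zero_of_forall_mem_sFiltration {f : MvPowerSeries (σ ⊕ τ) R}
    (h : ∀ n, f ∈ sFiltration σ τ R n) : f = 0 := by
  rw [← weightedOrder_eq_top_iff (Sum.elim 0 1), ENat.eq_top_iff_forall_ge]
  exact h

section Burgers

variable (i j : τ → σ) (c : τ → R)

def IsBurgersSolution (Ψ : MvPowerSeries (σ ⊕ τ) R) : Prop :=
  ∀ s, pderiv R (Sum.inr s) Ψ =
    c s • (pderiv R (Sum.inl (i s)) (pderiv R (Sum.inl (j s)) Ψ) +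
      pderiv R (Sum.inl (i s)) Ψ * pderiv R (Sum.inl (j s)) Ψ)

variable {i j c}

theorem IsBurgersSolution.unique [IsAddTorsionFree R] {Ψ₁ Ψ₂ : MvPowerSeries (σ ⊕ τ) R}
    (h₁ : IsBurgersSolution i j c Ψ₁) (h₂ : IsBurgersSolution i j c Ψ₂)
    (h₀ : killCompl Function.Embedding.inl Ψ₁ = killCompl Function.Embedding.inl Ψ₂) :
    Ψ₁ = Ψ₂ := by
  rw [← sub_eq_zero]
  refine eq_zero_of_forall_mem_sFiltration fun n => ?_
  induction n with
  | zero => simp [mem_sFiltration]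
  | succ n ih =>
    refine mem_sFiltration_succ (by rw [map_sub, h₀, sub_self]) fun s => ?_
    have hx := pderiv_inl_mem_sFiltration ih
    have key : pderiv R (Sum.inr s) (Ψ₁ - Ψ₂) =
        c s • (pderiv R (Sum.inl (i s)) (pderiv R (Sum.inl (j s)) (Ψ₁ - Ψ₂)) +
          (pderiv R (Sum.inl (i s)) Ψ₁ * pderiv R (Sum.inl (j s)) (Ψ₁ - Ψ₂) +
            pderiv R (Sum.inl (i s)) (Ψ₁ - Ψ₂) * pderiv R (Sum.inl (j s)) Ψ₂)) := by
      simp only [map_sub, h₁ s, h₂ s, smul_eq_C_mul]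
      ring
    rw [key]
    exact Submodule.smul_of_tower_mem _ _ (add_mem (pderiv_inl_mem_sFiltration (hx _) _)
      (add_mem (Ideal.mul_mem_left _ _ (hx _)) (Ideal.mul_mem_right _ _ (hx _))))

variable [Algebra ℚ R]

theorem exists_isBurgersSolution (U : MvPowerSeries σ R) :
    ∃ Ψ, IsBurgersSolution i j c Ψ ∧ killCompl Function.Embedding.inl Ψ = U := by
  have : IsAddTorsionFree R := .of_module_rat R
  have hU : constantCoeff (U - C (constantCoeff U)) = 0 := by
    rw [map_sub, constantCoeff_C, sub_self]
  obtain ⟨Φ₀, hΦ₀, hΦ₀U⟩ : ∃ Φ₀ : MvPowerSeries σ R,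
      constantCoeff Φ₀ = 1 ∧ ∀ a, pderiv R a Φ₀ = Φ₀ * pderiv R a U :=
    ⟨_, constantCoeff_exp_subst hU, fun a => by
      rw [pderiv_exp_subst hU, map_sub, pderiv_C, sub_zero]⟩
  obtain ⟨Φ, hΦΦ₀, hheat⟩ := exists_heat_solution i j c Φ₀
  have hΦ : constantCoeff Φ = 1 := by
    rw [← constantCoeff_killCompl Function.Embedding.inl Φ, hΦΦ₀, hΦ₀]
  set Ψ := C (constantCoeff U) + (PowerSeries.log R).subst (Φ - 1)
  have hlog : ∀ t, Φ * pderiv R t Ψ = pderiv R t Φ := fun t => by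
    rw [map_add, pderiv_C, zero_add, mul_pderiv_log_subst hΦ]
  refine ⟨Ψ, fun s => burgers_of_heat (isUnit_iff_constantCoeff.2 (hΦ ▸ isUnit_one)) hlog
    (hheat s), pderiv.ext (fun a => ?_) ?_⟩
  · refine (isUnit_iff_constantCoeff.2 (hΦ₀ ▸ isUnit_one)).mul_left_cancel ?_
    rw [← hΦ₀U, ← hΦΦ₀, pderiv_killCompl, ← map_mul, Function.Embedding.inl_apply, hlog]
    exact (pderiv_killCompl _ _ _).symm
  · rw [constantCoeff_killCompl, map_add, constantCoeff_C,
      PowerSeries.constantCoeff_subst_eq_zero (by rw [map_sub, hΦ, map_one, sub_self]) _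
        PowerSeries.constantCoeff_log, add_zero]

theorem existsUnique_isBurgersSolution (U : MvPowerSeries σ R) :
    ∃! Ψ, IsBurgersSolution i j c Ψ ∧ killCompl Function.Embedding.inl Ψ = U := by
  have : IsAddTorsionFree R := .of_module_rat R
  obtain ⟨Ψ, hΨ, hΨU⟩ := exists_isBurgersSolution (i := i) (j := j) (c := c) U
  exact ⟨Ψ, ⟨hΨ, hΨU⟩, fun Ψ' ⟨hΨ', hΨ'U⟩ => hΨ'.unique hΨ (hΨ'U.trans hΨU.symm)⟩

end Burgers

end MvPowerSeries

theorem pd_eq_pderiv {σ R : Type*} [CommSemiring R] (i : σ) (f : MvPowerSeries σ R) :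
    pd R i f = pderiv R i f := by
  ext m
  rw [coeff_pderiv, mul_comm, ← Nat.cast_succ]
  rfl

theorem resS0_eq_killCompl {r : ℕ} {R : Type*} [CommSemiring R]
    (f : MvPowerSeries (Fin r ⊕ SVar r) R) : resS0 f = killCompl Function.Embedding.inl f := by
  ext m
  rw [coeff_killCompl, Finsupp.embDomain_eq_mapDomain]
  rfl

theorem sIdx_of_le {r : ℕ} {i j : Fin r} (h : i ≤ j) : sIdx i j = ⟨(i, j), h⟩ :=
  dif_pos h

theorem stmt1_general {r : ℕ} (R : Type*) [CommRing R] [Algebra ℚ R]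
    (hbar : R) (U : MvPowerSeries (Fin r) R) :
    ∃! Ψ : MvPowerSeries (Fin r ⊕ SVar r) R,
      (∀ i j : Fin r, i ≤ j →
        pd R (Sum.inr (sIdx i j)) Ψ =
          (if i = j then (2 : ℚ)⁻¹ else 1) •
            (MvPowerSeries.C (σ := Fin r ⊕ SVar r) (R := R) hbar *
              (pd R (Sum.inl i) (pd R (Sum.inl j) Ψ) +
                pd R (Sum.inl i) Ψ * pd R (Sum.inl j) Ψ))) ∧
      resS0 Ψ = U := by
  refine (existsUnique_congr fun Ψ => and_congr ?_ (by rw [resS0_eq_killCompl])).2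
    (existsUnique_isBurgersSolution (i := fun s : SVar r => s.1.1) (j := fun s => s.1.2)
      (c := fun s => (if s.1.1 = s.1.2 then (2 : ℚ)⁻¹ else 1) • hbar) U)
  simp only [pd_eq_pderiv, IsBurgersSolution, smul_assoc, ← smul_eq_C_mul]
  constructor
  · intro h s
    have hs := h s.1.1 s.1.2 s.2
    rwa [sIdx_of_le s.2] at hs
  · intro h i j hij
    rw [sIdx_of_le hij]
    exact h ⟨(i, j), hij⟩

/-- For every `ħ ∈ R` and every `U ∈ R[[x_1,…,x_r]]` there is a unique
formal power series `Ψ` with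
`∂Ψ/∂s_{ij} = (ħ/{ij}!)·[∂²Ψ/∂x_i∂x_j + (∂Ψ/∂x_i)(∂Ψ/∂x_j)]` for all `i ≤ j`,
and `Ψ|_{S=0} = U`. -/
theorem stmt1 {r : ℕ} (hr : 1 ≤ r) (R : Type*) [CommRing R] [Algebra ℚ R]
    (hbar : R) (U : MvPowerSeries (Fin r) R) :
    ∃! Ψ : MvPowerSeries (Fin r ⊕ SVar r) R,
      (∀ i j : Fin r, i ≤ j →
        pd R (Sum.inr (sIdx i j)) Ψ =
          (if i = j then (2 : ℚ)⁻¹ else 1) •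
            (MvPowerSeries.C (σ := Fin r ⊕ SVar r) (R := R) hbar *
              (pd R (Sum.inl i) (pd R (Sum.inl j) Ψ) +
                pd R (Sum.inl i) Ψ * pd R (Sum.inl j) Ψ))) ∧
      resS0 Ψ = U :=
  stmt1_general R hbar U
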